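/- arXiv:2112.06599 — 2 statements merged into one kernel-verified Lean document; each statement's English description precedes it below -/
import Mathlib

section
/- Let r ≥ 3 be an integer such that 2^r − 1 is prime, and let G = (C₂)^r ⋊ C_{2^r−1} be the Frobenius group built from the field F_{2^r}, with H the Frobenius complement of order 2^r − 1. Then ψ_H(G) > ψ_{H_m}(C_n), where n = |G|, m = |H|, and H_m is the unique subgroup of order m in C_n. In particular, the inequality ψ_H(G) ≤ ψ_{H_m}(C_n), valid for nilpotent groups, fails for some solvable groups. -/
open Finset

/-- The order of `x` relative to the subgroup `H`: the least positive `m` with `x ^ m ∈ H`. -/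
noncomputable def relOrder {G : Type*} [Group G] (H : Subgroup G) (x : G) : ℕ :=
  sInf {m : ℕ | 0 < m ∧ x ^ m ∈ H}

/-- `ψ_H(G)`, the sum of element orders of `G` relative to the subgroup `H`. -/
noncomputable def psiRel (G : Type*) [Group G] [Fintype G] (H : Subgroup G) : ℕ :=
  ∑ x : G, relOrder H x

/-- `ψ(G)`, the sum of element orders of `G`. -/
noncomputable def psi (G : Type*) [Group G] [Fintype G] : ℕ :=
  ∑ x : G, orderOf x

/-- The action of the multiplicative group of a field `F` on the additive group of `F`
(written multiplicatively), by field multiplication. -/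
def fieldMulAction (F : Type*) [Field F] : Fˣ →* MulAut (Multiplicative F) where
  toFun u :=
    { toFun := fun x => Multiplicative.ofAdd (u • x.toAdd)
      invFun := fun x => Multiplicative.ofAdd (u⁻¹ • x.toAdd)
      left_inv := fun x => by simp
      right_inv := fun x => by simp
      map_mul' := fun x y => by
        simp [← ofAdd_add, smul_add] }
  map_one' := by
    ext x; simp
  map_mul' := fun u v => by
    ext x; simp [mul_smul]

instance semidirectFintype {N G : Type*} [Group N] [Group G] [Fintype N] [Fintype G]
    (φ : G →* MulAut N) : Fintype (N ⋊[φ] G) :=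
  Fintype.ofEquiv (N × G)
    { toFun := fun p => ⟨p.1, p.2⟩
      invFun := fun g => (g.1, g.2)
      left_inv := fun _ => rfl
      right_inv := fun _ => rfl }

/-- The Frobenius group `F ⋊ Fˣ` built from a field `F`. -/
abbrev frobGroup (F : Type*) [Field F] := Multiplicative F ⋊[fieldMulAction F] Fˣ

/-- The Frobenius complement: the copy of `Fˣ` inside `frobGroup F`. -/
abbrev frobComplement (F : Type*) [Field F] : Subgroup (frobGroup F) :=
  (SemidirectProduct.inr : Fˣ →* frobGroup F).range

/-! ### Auxiliary lemmas on `relOrder` -/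

section general
variable {G : Type*} [Group G] [Finite G] (H : Subgroup G) (x : G)

lemma relOrder_mem : 0 < relOrder H x ∧ x ^ (relOrder H x) ∈ H := by
  have hne : {m : ℕ | 0 < m ∧ x ^ m ∈ H}.Nonempty :=
    ⟨Nat.card G, Nat.card_pos, by rw [pow_card_eq_one']; exact H.one_mem⟩
  exact Nat.sInf_mem hne

lemma le_relOrder {c : ℕ} (h : ∀ k, 0 < k → x ^ k ∈ H → c ≤ k) : c ≤ relOrder H x :=
  h _ (relOrder_mem H x).1 (relOrder_mem H x).2

end general

/-! ### relOrder relative to the unique subgroup of order `m` in a cyclic group -/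

section cyc
variable {α : Type*} [CommGroup α] [Fintype α] [IsCyclic α] [DecidableEq α]

lemma mem_iff_pow_eq_one {m : ℕ} (hm : 0 < m) (K : Subgroup α) (hK : Nat.card K = m)
    {y : α} : y ∈ K ↔ y ^ m = 1 := by
  set T : Subgroup α := (powMonoidHom m : α →* α).ker with hT
  have hKT : K ≤ T := by
    intro z hz
    have : (⟨z, hz⟩ : K) ^ m = 1 := by rw [← hK]; exact pow_card_eq_one'
    have : z ^ m = 1 := by simpa using congrArg (Subtype.val) this
    simpa [hT, MonoidHom.mem_ker, powMonoidHom_apply] using this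
  have hcard : Nat.card T ≤ m := by
    have h1 : Nat.card T = #{a : α | a ^ m = 1} := by
      rw [Nat.card_eq_fintype_card, Fintype.card_subtype]
      congr 1
      ext a
      simp [hT, MonoidHom.mem_ker, powMonoidHom_apply]
    rw [h1]
    classical
    exact IsCyclic.card_pow_eq_one_le hm
  have : K = T := Subgroup.eq_of_le_of_card_ge hKT (by omega)
  rw [this, hT]
  simp [MonoidHom.mem_ker, powMonoidHom_apply]

lemma relOrder_eq_orderOf_pow {m : ℕ} (hm : 0 < m) (K : Subgroup α) (hK : Nat.card K = m)
    (x : α) : relOrder K x = orderOf (x ^ m) := by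
  have key : ∀ k, (x ^ k ∈ K ↔ (x ^ m) ^ k = 1) := by
    intro k
    rw [mem_iff_pow_eq_one hm K hK, ← pow_mul, ← pow_mul, mul_comm]
  have h1 : relOrder K x ≤ orderOf (x ^ m) := by
    apply Nat.sInf_le
    refine ⟨orderOf_pos _, (key _).mpr (pow_orderOf_eq_one _)⟩
  have h2 : orderOf (x ^ m) ≤ relOrder K x := by
    have hmem := Nat.sInf_mem (⟨Nat.card α, Nat.card_pos, by
      rw [pow_card_eq_one']; exact K.one_mem⟩ : {k : ℕ | 0 < k ∧ x ^ k ∈ K}.Nonempty)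
    obtain ⟨hpos, hin⟩ := hmem
    exact Nat.le_of_dvd hpos (orderOf_dvd_of_pow_eq_one ((key _).mp hin))
  omega

end cyc

/-! ### Arithmetic sums -/

lemma shift_periodic (q : ℕ) (f : ℕ → ℕ) (hf : ∀ i, f (i + q) = f i) (m j : ℕ) :
    f (q * m + j) = f j := by
  induction m with
  | zero => simp
  | succ m ih2 => rw [show q * (m+1) + j = (q*m + j) + q by ring, hf, ih2]

lemma sum_periodic_mul (q : ℕ) (f : ℕ → ℕ) (hf : ∀ i, f (i + q) = f i) (m : ℕ) :
    ∑ i ∈ range (q * m), f i = m * ∑ i ∈ range q, f i := by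
  induction m with
  | zero => simp
  | succ m ih =>
    rw [show q * (m + 1) = q * m + q by ring, Finset.sum_range_add, ih]
    simp only [shift_periodic q f hf]
    ring

lemma sum_range_even_odd (f : ℕ → ℕ) (n : ℕ) :
    ∑ i ∈ range (2 * n), f i = ∑ i ∈ range n, f (2 * i) + ∑ i ∈ range n, f (2 * i + 1) := by
  induction n with
  | zero => simp
  | succ n ih =>
    rw [show 2 * (n + 1) = 2 * n + 1 + 1 by ring, Finset.sum_range_succ, Finset.sum_range_succ,
      ih, Finset.sum_range_succ, Finset.sum_range_succ]
    ring

lemma S_formula (r : ℕ) : 3 * ∑ i ∈ range (2 ^ r), 2 ^ r / Nat.gcd (2 ^ r) i = 2 * 4 ^ r + 1 := by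
  induction r with
  | zero => simp
  | succ r ih =>
    have h2 : (2:ℕ) ^ (r+1) = 2 * 2 ^ r := by ring
    rw [h2, sum_range_even_odd]
    have heven : ∀ i, 2 * 2 ^ r / Nat.gcd (2 * 2 ^ r) (2 * i) = 2 ^ r / Nat.gcd (2 ^ r) i := by
      intro i
      rw [Nat.gcd_mul_left, Nat.mul_div_mul_left _ _ (by norm_num)]
    have hodd : ∀ i, Nat.gcd (2 * 2 ^ r) (2 * i + 1) = 1 := by
      intro i
      have h1 : Nat.Coprime 2 (2 * i + 1) := Nat.coprime_two_left.mpr ⟨i, by ring⟩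
      have : Nat.Coprime (2 ^ (r+1)) (2 * i + 1) := Nat.Coprime.pow_left _ h1
      simpa [h2] using this
    simp only [heven, hodd, Nat.div_one]
    rw [Finset.sum_const, Finset.card_range]
    rw [Nat.mul_add, ih, show (4:ℕ) ^ (r+1) = 4 * 4 ^ r by ring,
      show (4:ℕ) ^ r = 2 ^ r * 2 ^ r by rw [show (4:ℕ) = 2*2 by norm_num, mul_pow]]
    ring

lemma psiK_sum (n q m : ℕ) [NeZero n] (hm : 0 < m) (hn : n = q * m) :
    ∑ x : Multiplicative (ZMod n), orderOf (x ^ m)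
      = m * ∑ i ∈ range q, q / Nat.gcd q i := by
  subst hn
  set n := q * m with hn
  have hn0 : n ≠ 0 := NeZero.ne _
  have step1 : ∀ t : ZMod n, orderOf ((Multiplicative.ofAdd t) ^ m) = n / Nat.gcd n (m * t.val) := by
    intro t
    rw [← ofAdd_nsmul, orderOf_ofAdd_eq_addOrderOf]
    have h2 : m • t = ((m * t.val : ℕ) : ZMod n) := by
      push_cast
      rw [ZMod.natCast_val, ZMod.cast_id, nsmul_eq_mul]
    rw [h2, ZMod.addOrderOf_coe _ hn0]
  have step2 : ∑ x : Multiplicative (ZMod n), orderOf (x ^ m)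
      = ∑ t : ZMod n, n / Nat.gcd n (m * t.val) := by
    rw [← Equiv.sum_comp (Multiplicative.ofAdd (α := ZMod n)) (fun x => orderOf (x ^ m))]
    exact Finset.sum_congr rfl fun t _ => step1 t
  rw [step2]
  have step3 : ∑ t : ZMod n, n / Nat.gcd n (m * (t.val)) =
      ∑ i ∈ range n, n / Nat.gcd n (m * i) := by
    refine Finset.sum_nbij' (fun t => t.val) (fun i => (i : ZMod n)) ?_ ?_ ?_ ?_ ?_
    · intro t _; exact Finset.mem_range.mpr (ZMod.val_lt t)
    · intro i _; exact Finset.mem_univ _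
    · intro t _; exact ZMod.natCast_rightInverse t
    · intro i hi; exact ZMod.val_cast_of_lt (Finset.mem_range.mp hi)
    · intro t _; rfl
  rw [step3]
  have step4 : ∀ i, n / Nat.gcd n (m * i) = q / Nat.gcd q i := by
    intro i
    rw [hn, show q * m = m * q by ring, Nat.gcd_mul_left, Nat.mul_div_mul_left _ _ hm]
  simp only [step4]
  have periodic : ∀ i, q / Nat.gcd q (i + q) = q / Nat.gcd q i := by
    intro i
    rw [show i + q = i + 1 * q by ring, Nat.gcd_add_mul_right_right]
  exact sum_periodic_mul q (fun i => q / Nat.gcd q i) periodic m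

/-! ### The Frobenius group -/

section frob
variable {F : Type*} [Field F]

lemma mem_frobComplement_iff (g : frobGroup F) : g ∈ frobComplement F ↔ g.left = 1 := by
  constructor
  · rintro ⟨u, rfl⟩; rfl
  · intro h
    exact ⟨g.right, by ext <;> simp [h]⟩

lemma frob_pow_right (g : frobGroup F) (k : ℕ) : (g ^ k).right = g.right ^ k := by
  induction k with
  | zero => simp
  | succ k ih => rw [pow_succ, pow_succ, SemidirectProduct.mul_right, ih]

lemma frob_pow_left (g : frobGroup F) (k : ℕ) :
    ((g ^ k).left).toAdd = (∑ i ∈ range k, ((g.right : Fˣ) : F) ^ i) * (g.left).toAdd := by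
  induction k with
  | zero => simp [SemidirectProduct.one_left]
  | succ k ih =>
    rw [pow_succ, SemidirectProduct.mul_left, frob_pow_right]
    rw [Finset.sum_range_succ, add_mul, ← ih]
    simp only [fieldMulAction, Units.smul_def, toAdd_mul, MonoidHom.coe_mk, OneHom.coe_mk,
      MulEquiv.coe_mk, Equiv.coe_fn_mk, toAdd_ofAdd, smul_eq_mul, Units.val_pow_eq_pow_val]

lemma frob_relOrder_ge [Fintype F] [DecidableEq F] (hp : Nat.Prime (Fintype.card Fˣ))
    (g : frobGroup F) (ha : g.left ≠ 1) (hu : g.right ≠ 1) {k : ℕ} (hk : 0 < k)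
    (hmem : g ^ k ∈ frobComplement F) : Fintype.card Fˣ ≤ k := by
  rw [mem_frobComplement_iff] at hmem
  have h0 : ((g ^ k).left).toAdd = 0 := by rw [hmem]; rfl
  rw [frob_pow_left] at h0
  have hc : (g.left).toAdd ≠ 0 := fun h => ha (by
    have := congrArg Multiplicative.ofAdd h
    simpa using this)
  have hsum : (∑ i ∈ range k, ((g.right : Fˣ) : F) ^ i) = 0 :=
    (mul_eq_zero.mp h0).resolve_right hc
  have hxk : ((g.right : Fˣ) : F) ^ k = 1 := by
    have := geom_sum_mul ((g.right : Fˣ) : F) k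
    rw [hsum, zero_mul] at this
    exact sub_eq_zero.mp this.symm
  have huk : g.right ^ k = 1 := by
    ext
    simpa [Units.val_pow_eq_pow_val] using hxk
  have hdvd : orderOf g.right ∣ k := orderOf_dvd_of_pow_eq_one huk
  have hdvd2 : orderOf g.right ∣ Fintype.card Fˣ := orderOf_dvd_card
  have hne1 : orderOf g.right ≠ 1 := fun h => hu (orderOf_eq_one_iff.mp h)
  have : orderOf g.right = Fintype.card Fˣ :=
    ((Nat.Prime.eq_one_or_self_of_dvd hp _ hdvd2).resolve_left hne1)
  exact Nat.le_of_dvd hk (this ▸ hdvd)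

/-- The underlying equivalence of the semidirect product with the product. -/
def frobEquiv (F : Type*) [Field F] : (Multiplicative F × Fˣ) ≃ frobGroup F where
  toFun := fun p => ⟨p.1, p.2⟩
  invFun := fun g => (g.left, g.right)
  left_inv := fun _ => rfl
  right_inv := fun _ => rfl

lemma card_frobGroup [Fintype F] [DecidableEq F] :
    Fintype.card (frobGroup F) = Fintype.card F * Fintype.card Fˣ := by
  rw [← Fintype.card_congr (frobEquiv F), Fintype.card_prod, Fintype.card_multiplicative]

end frob

lemma sum_aux {A B : Type*} [Fintype A] [Fintype B] [DecidableEq A] [DecidableEq B]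
    (a0 : A) (b0 : B) (c : ℕ) :
    ∑ p : A × B, (if p.1 ≠ a0 ∧ p.2 ≠ b0 then c else 1)
      = (Fintype.card A - 1) * ((Fintype.card B - 1) * c) + (Fintype.card A * Fintype.card B
        - (Fintype.card A - 1) * (Fintype.card B - 1)) := by
  classical
  rw [Finset.sum_ite, Finset.sum_const, Finset.sum_const]
  have hcard : #(univ.filter (fun p : A × B => p.1 ≠ a0 ∧ p.2 ≠ b0))
      = (Fintype.card A - 1) * (Fintype.card B - 1) := by
    have : (univ.filter (fun p : A × B => p.1 ≠ a0 ∧ p.2 ≠ b0))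
        = (univ.erase a0) ×ˢ (univ.erase b0) := by
      ext p
      simp [Finset.mem_product, and_comm]
    rw [this, Finset.card_product, Finset.card_erase_of_mem (Finset.mem_univ _),
      Finset.card_erase_of_mem (Finset.mem_univ _), Finset.card_univ, Finset.card_univ]
  have hcard2 : #(univ.filter (fun p : A × B => ¬(p.1 ≠ a0 ∧ p.2 ≠ b0)))
      = Fintype.card A * Fintype.card B - (Fintype.card A - 1) * (Fintype.card B - 1) := by
    have := Finset.card_filter_add_card_filter_not
      (s := (univ : Finset (A × B))) (p := fun p => p.1 ≠ a0 ∧ p.2 ≠ b0)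
    rw [hcard] at this
    rw [Finset.card_univ, Fintype.card_prod] at this
    omega
  rw [hcard, hcard2]
  simp [mul_comm, mul_assoc, mul_left_comm]

theorem psiRel_frobenius_gt (r : ℕ) (hr : 3 ≤ r) (hmersenne : Nat.Prime (2 ^ r - 1))
    (F : Type*) [Field F] [Fintype F] [DecidableEq F] (hF : Fintype.card F = 2 ^ r)
    (n m : ℕ) [NeZero n]
    (hn : n = Fintype.card (frobGroup F)) (hm : m = Nat.card (frobComplement F))
    (K : Subgroup (Multiplicative (ZMod n))) (hK : Nat.card K = m) :
    psiRel (Multiplicative (ZMod n)) K < psiRel (frobGroup F) (frobComplement F) := by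
  classical
  have hq8 : 8 ≤ 2 ^ r := by
    calc (8:ℕ) = 2 ^ 3 := by norm_num
    _ ≤ 2 ^ r := Nat.pow_le_pow_right (by norm_num) hr
  set q : ℕ := 2 ^ r with hqdef
  have hcardF : Fintype.card F = q := hF
  have hcardU : Fintype.card Fˣ = q - 1 := by rw [Fintype.card_units, hcardF]
  have hmq : m = q - 1 := by
    rw [hm]
    have h1 : Nat.card (frobComplement F) = Nat.card Fˣ :=
      Nat.card_congr (MonoidHom.ofInjective SemidirectProduct.inr_injective).toEquiv.symm
    rw [h1, Nat.card_eq_fintype_card, hcardU]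
  have hmpos : 0 < m := by rw [hmq]; omega
  have hcardG : Fintype.card (frobGroup F) = q * (q - 1) := by
    rw [card_frobGroup, hcardF, hcardU]
  have hnqm : n = q * m := by rw [hn, hcardG, hmq]
  have hprime : Nat.Prime (Fintype.card Fˣ) := by
    rw [hcardU, hqdef]
    exact hmersenne
  -- LHS: exact value
  have hLHS : psiRel (Multiplicative (ZMod n)) K = m * ∑ i ∈ range q, q / Nat.gcd q i := by
    rw [psiRel]
    have h1 : ∀ x : Multiplicative (ZMod n), relOrder K x = orderOf (x ^ m) :=
      fun x => relOrder_eq_orderOf_pow hmpos K hK x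
    simp only [h1]
    exact psiK_sum n q m hmpos hnqm
  -- RHS: lower bound
  set B : ℕ := (q - 1) * ((q - 1 - 1) * (q - 1)) + (q * (q - 1) - (q - 1) * (q - 1 - 1)) with hB
  have hRHS : B ≤ psiRel (frobGroup F) (frobComplement F) := by
    rw [psiRel]
    have hstep : ∑ x : frobGroup F,
        (if x.left ≠ 1 ∧ x.right ≠ 1 then Fintype.card Fˣ else 1)
          ≤ ∑ x : frobGroup F, relOrder (frobComplement F) x := by
      apply Finset.sum_le_sum
      intro x _
      by_cases h : x.left ≠ 1 ∧ x.right ≠ 1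
      · rw [if_pos h]
        exact le_relOrder _ _ (fun k hk hmem => frob_relOrder_ge hprime x h.1 h.2 hk hmem)
      · rw [if_neg h]
        exact (relOrder_mem (frobComplement F) x).1
    refine le_trans ?_ hstep
    have hsum : ∑ x : frobGroup F,
        (if x.left ≠ 1 ∧ x.right ≠ 1 then Fintype.card Fˣ else 1)
        = ∑ p : Multiplicative F × Fˣ,
            (if p.1 ≠ 1 ∧ p.2 ≠ 1 then Fintype.card Fˣ else 1) := by
      rw [← Equiv.sum_comp (frobEquiv F)
        (fun x => if x.left ≠ 1 ∧ x.right ≠ 1 then Fintype.card Fˣ else 1)]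
      rfl
    rw [hsum, sum_aux 1 1 (Fintype.card Fˣ), Fintype.card_multiplicative, hcardF, hcardU, hB]
  -- arithmetic comparison
  have hcomp : psiRel (Multiplicative (ZMod n)) K < B := by
    have h3 : 3 * psiRel (Multiplicative (ZMod n)) K = m * (2 * 4 ^ r + 1) := by
      rw [hLHS, mul_left_comm, hqdef, S_formula]
    have h4 : (4:ℕ) ^ r = q * q := by
      rw [hqdef, show (4:ℕ) = 2 * 2 by norm_num, mul_pow]
    have hnum : m * (2 * (q * q) + 1) < 3 * B := by
      obtain ⟨b, hb⟩ : ∃ b, q = b + 8 := ⟨q - 8, by omega⟩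
      rw [hmq, hB, hb]
      have e1 : b + 8 - 1 = b + 7 := by omega
      have e2 : b + 7 - 1 = b + 6 := by omega
      rw [e1, e2]
      have e3 : (b + 8) * (b + 7) - (b + 7) * (b + 6) = 2 * (b + 7) := by
        have : (b + 8) * (b + 7) = (b + 7) * (b + 6) + 2 * (b + 7) := by ring
        omega
      rw [e3]
      nlinarith [sq_nonneg b, Nat.zero_le b]
    rw [h4] at h3
    omega
  omega
end

section
/- Let G be a finite group and H a subgroup of index q = p₁^{α₁} ⋯ p_k^{α_k} (primes p₁ < ⋯ < p_k). Then ψ'_H(G) := ψ_H(G)/ψ_{H_m}(C_n) < ∏_{i=1}^k (p_i + 1)/p_i ≤ (3/2)^k, where n = |G|, m = |H|, and H_m is the unique subgroup of order m of C_n. -/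
open Finset

/-!
Every relative order `o_H(x)` is at most `q = |G : H|`, since two of the cosets
`x⁰H, …, x^qH` coincide; hence `ψ_H(G) ≤ m q²` with `m = |H|`. In `C_n` the subgroup `K` is
normal with cyclic quotient of order `q`, so `ψ_K(C_n) = m ∑_{d ∣ q} d φ(d)`. This divisor sum
is multiplicative, and at `p^k` it equals `(p^{2k+1} + 1)/(p + 1) > p^{2k} · p/(p + 1)`; thus
`q² < ∑_{d ∣ q} d φ(d) · ∏_{p ∣ q} (p + 1)/p`.
-/

namespace ArithmeticFunction

noncomputable def totient : ArithmeticFunction ℕ := ⟨Nat.totient, Nat.totient_zero⟩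

theorem totient_apply (n : ℕ) : totient n = n.totient := rfl

theorem isMultiplicative_totient : totient.IsMultiplicative :=
  ⟨Nat.totient_one, fun h => Nat.totient_mul h⟩

noncomputable def sumDivisorsMulTotient : ArithmeticFunction ℕ :=
  zeta * (ArithmeticFunction.id).pmul totient

theorem sumDivisorsMulTotient_apply (n : ℕ) :
    sumDivisorsMulTotient n = ∑ d ∈ n.divisors, d * d.totient := by
  simp only [sumDivisorsMulTotient, zeta_mul_apply, pmul_apply, id_apply, totient_apply]

theorem isMultiplicative_sumDivisorsMulTotient : sumDivisorsMulTotient.IsMultiplicative :=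
  isMultiplicative_zeta.mul (isMultiplicative_id.pmul isMultiplicative_totient)

theorem succ_mul_sumDivisorsMulTotient_prime_pow {p : ℕ} (hp : p.Prime) (k : ℕ) :
    (p + 1) * sumDivisorsMulTotient (p ^ k) = p ^ (2 * k + 1) + 1 := by
  rw [sumDivisorsMulTotient_apply, Nat.divisors_prime_pow hp, Finset.sum_map]
  induction k with
  | zero => simp
  | succ k ih =>
    rw [Finset.sum_range_succ, Nat.mul_add, ih]
    simp only [Function.Embedding.coeFn_mk, Nat.totient_prime_pow_succ hp]
    zify [hp.one_le]
    ring

theorem sq_lt_sumDivisorsMulTotient_prime_pow_mul {p : ℕ} (hp : p.Prime) (k : ℕ) :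
    ((p : ℚ) ^ k) ^ 2 < sumDivisorsMulTotient (p ^ k) * ((p + 1) / p) := by
  have hp0 : (0 : ℚ) < p := by exact_mod_cast hp.pos
  have h : ((p : ℚ) + 1) * sumDivisorsMulTotient (p ^ k) = (p : ℚ) ^ (2 * k + 1) + 1 := by
    exact_mod_cast succ_mul_sumDivisorsMulTotient_prime_pow hp k
  rw [mul_div_assoc', lt_div_iff₀ hp0, mul_comm _ ((p : ℚ) + 1), h]
  calc ((p : ℚ) ^ k) ^ 2 * p = (p : ℚ) ^ (2 * k + 1) := by ring
    _ < _ := lt_add_one _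

theorem sq_lt_sumDivisorsMulTotient_mul_prod {q : ℕ} (hq : 1 < q) :
    (q : ℚ) ^ 2 < sumDivisorsMulTotient q * ∏ p ∈ q.primeFactors, ((p : ℚ) + 1) / p := by
  have hq0 : q ≠ 0 := by omega
  calc (q : ℚ) ^ 2 = ∏ p ∈ q.primeFactors, ((p : ℚ) ^ q.factorization p) ^ 2 := by
        nth_rw 1 [Nat.prod_primeFactors_pow_factorization hq0]
        push_cast
        rw [Finset.prod_pow]
    _ < ∏ p ∈ q.primeFactors,
          sumDivisorsMulTotient (p ^ q.factorization p) * (((p : ℚ) + 1) / p) :=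
        Finset.prod_lt_prod_of_nonempty
          (fun p hp => by have := (Nat.prime_of_mem_primeFactors hp).pos; positivity)
          (fun p hp =>
            sq_lt_sumDivisorsMulTotient_prime_pow_mul (Nat.prime_of_mem_primeFactors hp) _)
          (Nat.nonempty_primeFactors.mpr hq)
    _ = _ := by
        rw [Finset.prod_mul_distrib,
          isMultiplicative_sumDivisorsMulTotient.multiplicative_factorization _ hq0,
          Nat.prod_factorization_eq_prod_primeFactors]
        push_cast
        rfl

end ArithmeticFunction

open ArithmeticFunction

namespace Subgroup

variable {G : Type*} [Group G] (H : Subgroup G)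

theorem exists_pow_mem_le_index [H.FiniteIndex] (x : G) :
    ∃ m, 0 < m ∧ m ≤ H.index ∧ x ^ m ∈ H := by
  have := Fintype.ofFinite (G ⧸ H)
  obtain ⟨i, j, hne, hij⟩ := Fintype.exists_ne_map_eq_of_card_lt
    (fun i : Fin (H.index + 1) => ((x ^ (i : ℕ) : G) : G ⧸ H))
    (by simp [Subgroup.index, Nat.card_eq_fintype_card])
  wlog hlt : i < j generalizing i j
  · exact this j i hne.symm hij.symm (lt_of_le_of_ne (not_lt.mp hlt) hne.symm)
  refine ⟨j - i, Nat.sub_pos_of_lt hlt, by omega, ?_⟩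
  have hmem : (x ^ (i : ℕ))⁻¹ * x ^ (j : ℕ) ∈ H := QuotientGroup.eq.mp hij
  rwa [← pow_mul_pow_sub x (Fin.le_def.mp hlt.le), ← mul_assoc, inv_mul_cancel, one_mul] at hmem

end Subgroup

section RelOrder

variable {G : Type*} [Group G] (H : Subgroup G)

theorem relOrder_le_of_pow_mem {x : G} {m : ℕ} (hm : 0 < m) (h : x ^ m ∈ H) :
    relOrder H x ≤ m :=
  Nat.sInf_le ⟨hm, h⟩

theorem relOrder_le_index [H.FiniteIndex] (x : G) : relOrder H x ≤ H.index := by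
  obtain ⟨m, hm, hle, hmem⟩ := H.exists_pow_mem_le_index x
  exact (relOrder_le_of_pow_mem H hm hmem).trans hle

theorem relOrder_pos_and_pow_mem [H.FiniteIndex] (x : G) :
    0 < relOrder H x ∧ x ^ relOrder H x ∈ H := by
  obtain ⟨m, hm, -, hmem⟩ := H.exists_pow_mem_le_index x
  exact Nat.sInf_mem (s := {m | 0 < m ∧ x ^ m ∈ H}) ⟨m, hm, hmem⟩

theorem relOrder_eq_orderOf_mk [H.Normal] [H.FiniteIndex] (x : G) :
    relOrder H x = orderOf (x : G ⧸ H) := by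
  have pow_mem_iff (m : ℕ) : x ^ m ∈ H ↔ (x : G ⧸ H) ^ m = 1 := by
    rw [← QuotientGroup.mk_pow, QuotientGroup.eq_one_iff]
  obtain ⟨hpos, hmem⟩ := relOrder_pos_and_pow_mem H x
  exact le_antisymm
    (relOrder_le_of_pow_mem H (orderOf_pos _) ((pow_mem_iff _).mpr (pow_orderOf_eq_one _)))
    (Nat.le_of_dvd hpos (orderOf_dvd_of_pow_eq_one ((pow_mem_iff _).mp hmem)))

end RelOrder

theorem QuotientGroup.sum_comp_mk {G M : Type*} [Group G] [Fintype G] [AddCommMonoid M]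
    (H : Subgroup G) [Fintype (G ⧸ H)] (f : G ⧸ H → M) :
    ∑ x : G, f x = Nat.card H • ∑ y : G ⧸ H, f y := by
  classical
  rw [Fintype.sum_equiv Subgroup.groupEquivQuotientProdSubgroup (fun x : G => f x) (fun p => f p.1)
    (fun _ => rfl), Fintype.sum_prod_type, Finset.smul_sum]
  simp [Nat.card_eq_fintype_card]

theorem psiRel_le_card_mul_index {G : Type*} [Group G] [Fintype G] (H : Subgroup G) :
    psiRel G H ≤ Fintype.card G * H.index := by
  simpa [psiRel] using Finset.sum_le_sum fun x (_ : x ∈ univ) => relOrder_le_index H x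

theorem psiRel_eq_card_mul_psi_quotient {G : Type*} [Group G] [Fintype G] (H : Subgroup G)
    [H.Normal] [Fintype (G ⧸ H)] : psiRel G H = Nat.card H * psi (G ⧸ H) := by
  simp only [psiRel, relOrder_eq_orderOf_mk, QuotientGroup.sum_comp_mk H orderOf, psi, smul_eq_mul]

theorem psi_eq_sumDivisorsMulTotient_card (C : Type*) [Group C] [Fintype C] [IsCyclic C] :
    psi C = sumDivisorsMulTotient (Fintype.card C) := by
  classical
  rw [psi, sumDivisorsMulTotient_apply, ← Finset.sum_fiberwise_of_maps_to (g := orderOf)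
    (t := (Fintype.card C).divisors)
    fun x _ => Nat.mem_divisors.mpr ⟨orderOf_dvd_card, Fintype.card_ne_zero⟩]
  refine Finset.sum_congr rfl fun d hd => ?_
  rw [Finset.sum_congr rfl fun x hx => (Finset.mem_filter.mp hx).2, Finset.sum_const,
    IsCyclic.card_orderOf_eq_totient (Nat.dvd_of_mem_divisors hd), smul_eq_mul, mul_comm]

theorem prod_primeFactors_succ_div_le_three_halves_pow (q : ℕ) :
    ∏ p ∈ q.primeFactors, ((p : ℚ) + 1) / p ≤ (3 / 2 : ℚ) ^ q.primeFactors.card := by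
  rw [← Finset.prod_const]
  refine Finset.prod_le_prod (fun p hp => by positivity) fun p hp => ?_
  have hp2 : (2 : ℚ) ≤ p := by exact_mod_cast (Nat.prime_of_mem_primeFactors hp).two_le
  rw [div_le_div_iff₀ (by linarith) (by norm_num)]
  linarith

theorem psiRel_ratio_lt_prod {G : Type*} [Group G] [Fintype G] (H : Subgroup G)
    (hq : 1 < H.index)
    (n : ℕ) [NeZero n] (hn : n = Fintype.card G)
    (K : Subgroup (Multiplicative (ZMod n))) (hK : Nat.card K = Nat.card H) :
    (psiRel G H : ℚ) / (psiRel (Multiplicative (ZMod n)) K : ℚ) <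
        ∏ p ∈ H.index.primeFactors, ((p : ℚ) + 1) / p ∧
      ∏ p ∈ H.index.primeFactors, ((p : ℚ) + 1) / p ≤
        (3 / 2 : ℚ) ^ H.index.primeFactors.card := by
  classical
  set q := H.index
  set m := Nat.card H
  have hm : 0 < m := Nat.card_pos
  have hcardG : m * q = Fintype.card G := by rw [H.card_mul_index, Nat.card_eq_fintype_card]
  have hindexK : K.index = q := by
    refine Nat.eq_of_mul_eq_mul_left hm ?_
    rw [← hK, K.card_mul_index, hK, hcardG, ← hn, Nat.card_eq_fintype_card,
      Fintype.card_multiplicative, ZMod.card]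
  have hψK : psiRel (Multiplicative (ZMod n)) K = m * sumDivisorsMulTotient q := by
    rw [psiRel_eq_card_mul_psi_quotient, psi_eq_sumDivisorsMulTotient_card,
      ← Nat.card_eq_fintype_card, ← Subgroup.index, hindexK, hK]
  have hψH : (psiRel G H : ℚ) ≤ m * q ^ 2 := by
    rw [sq, ← mul_assoc]
    exact_mod_cast hcardG ▸ psiRel_le_card_mul_index H
  have key := sq_lt_sumDivisorsMulTotient_mul_prod hq
  have hS : 0 < sumDivisorsMulTotient q :=
    Nat.pos_of_ne_zero fun h => (sq_nonneg (q : ℚ)).not_gt (by simpa [h] using key)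
  refine ⟨?_, prod_primeFactors_succ_div_le_three_halves_pow q⟩
  rw [div_lt_iff₀ (by rw [hψK]; exact_mod_cast Nat.mul_pos hm hS), hψK]
  calc (psiRel G H : ℚ) ≤ m * q ^ 2 := hψH
    _ < m * (sumDivisorsMulTotient q * ∏ p ∈ q.primeFactors, ((p : ℚ) + 1) / p) :=
        mul_lt_mul_of_pos_left key (by exact_mod_cast hm)
    _ = _ := by push_cast; ring
end
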